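/- Let φ₁ = arctan(1/√2) and d₂ = (√6/2)·(π/2 − φ₁). The function x ↦ √(d₂/x + √6) is interval-integrable on (0, π/2 − φ₁), and −(1/2)·√(6√6) + (1/2)·∫ from 0 to (π/2 − φ₁) of √(d₂/x + √6) dx ≤ −0.5. In particular this quantity is negative, so in the Newtonian tetrahedral dihedral problem the right unstable branch of W^u(e₋₁₁) reaches the double-collision arm φ = π/2 with a negative value of v. -/
import Mathlib
open Real MeasureTheory

lemma sqle {x q : ℝ} (hq : 0 ≤ q) (h : x ≤ q^2) : Real.sqrt x ≤ q := by
  calc Real.sqrt x ≤ Real.sqrt (q^2) := Real.sqrt_le_sqrt h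
  _ = q := Real.sqrt_sq hq

lemma lesq {q x : ℝ} (hq : 0 ≤ q) (h : q^2 ≤ x) : q ≤ Real.sqrt x := by
  calc q = Real.sqrt (q^2) := (Real.sqrt_sq hq).symm
  _ ≤ Real.sqrt x := Real.sqrt_le_sqrt h

lemma s6lb : (2.449:ℝ) ≤ Real.sqrt 6 := lesq (by norm_num) (by norm_num)
lemma s6ub : Real.sqrt 6 ≤ 2.4495 := sqle (by norm_num) (by norm_num)
lemma s2lb : (1.4142:ℝ) ≤ Real.sqrt 2 := lesq (by norm_num) (by norm_num)
lemma s2ub : Real.sqrt 2 ≤ 1.41422 := sqle (by norm_num) (by norm_num)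

lemma L_ub : Real.arctan (Real.sqrt 2) ≤ 0.97 := by
  have habs : |(0.485:ℝ)| ≤ 1 := by rw [abs_of_nonneg] <;> norm_num
  have hs := Real.sin_bound habs
  have hc := Real.cos_bound habs
  rw [abs_of_nonneg (by norm_num : (0:ℝ) ≤ 0.485)] at hs hc
  have hs1 : (0.4631:ℝ) ≤ Real.sin 0.485 := by
    have := abs_le.1 hs; norm_num at this ⊢; linarith [this.1]
  have hc1 : (0.8795:ℝ) ≤ Real.cos 0.485 := by
    have := abs_le.1 hc; norm_num at this ⊢; linarith [this.1]
  have hc2 : Real.cos 0.485 ≤ 0.88528 := by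
    have := abs_le.1 hc; norm_num at this ⊢; linarith [this.2]
  have hpi : (3.141592:ℝ) < π := Real.pi_gt_d6
  have htan : Real.sqrt 2 ≤ Real.tan 0.97 := by
    have hcpos : 0 < Real.cos 0.97 :=
      Real.cos_pos_of_mem_Ioo ⟨by linarith, by linarith⟩
    rw [Real.tan_eq_sin_div_cos, le_div_iff₀ hcpos]
    have h97 : (0.97:ℝ) = 2 * 0.485 := by norm_num
    have hsin : Real.sin 0.97 = 2 * Real.sin 0.485 * Real.cos 0.485 := by
      rw [h97, Real.sin_two_mul]
    have hcos : Real.cos 0.97 = 2 * Real.cos 0.485 ^ 2 - 1 := by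
      rw [h97, Real.cos_two_mul]
    nlinarith [s2ub, Real.sqrt_nonneg 2]
  have := Real.arctan_strictMono.monotone htan
  rwa [Real.arctan_tan (by linarith) (by linarith)] at this

lemma L_lb : (0.9:ℝ) ≤ Real.arctan (Real.sqrt 2) := by
  have habs : |(0.45:ℝ)| ≤ 1 := by rw [abs_of_nonneg] <;> norm_num
  have hs := Real.sin_bound habs
  have hc := Real.cos_bound habs
  rw [abs_of_nonneg (by norm_num : (0:ℝ) ≤ 0.45)] at hs hc
  have hs2 : Real.sin 0.45 ≤ 0.43695 := by
    have := abs_le.1 hs; norm_num at this ⊢; linarith [this.2]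
  have hc1 : (0.89661:ℝ) ≤ Real.cos 0.45 := by
    have := abs_le.1 hc; norm_num at this ⊢; linarith [this.1]
  have hc2 : Real.cos 0.45 ≤ 0.90089 := by
    have := abs_le.1 hc; norm_num at this ⊢; linarith [this.2]
  have hsnn : 0 ≤ Real.sin 0.45 := Real.sin_nonneg_of_nonneg_of_le_pi (by norm_num)
    (by linarith [Real.pi_gt_d6])
  have hpi : (3.141592:ℝ) < π := Real.pi_gt_d6
  have htan : Real.tan 0.9 ≤ Real.sqrt 2 := by
    have h9 : (0.9:ℝ) = 2 * 0.45 := by norm_num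
    have hcos : Real.cos 0.9 = 2 * Real.cos 0.45 ^ 2 - 1 := by rw [h9, Real.cos_two_mul]
    have hcpos : (0.6078:ℝ) ≤ Real.cos 0.9 := by nlinarith
    rw [Real.tan_eq_sin_div_cos, div_le_iff₀ (by linarith)]
    have hsin : Real.sin 0.9 = 2 * Real.sin 0.45 * Real.cos 0.45 := by
      rw [h9, Real.sin_two_mul]
    nlinarith [s2lb]
  have := Real.arctan_strictMono.monotone htan
  rwa [Real.arctan_tan (by linarith) (by linarith)] at this


section Aux
variable (a : ℝ)

lemma aux_meas : Measurable (fun x : ℝ => Real.sqrt (a / x + Real.sqrt 6)) :=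
  Real.continuous_sqrt.measurable.comp ((measurable_const.div measurable_id).add_const _)

lemma aux_int (ha : 0 ≤ a) : IntervalIntegrable (fun x : ℝ => Real.sqrt (a / x + Real.sqrt 6))
    volume 0 1 := by
  have hg : IntervalIntegrable (fun x : ℝ => Real.sqrt a * x ^ (-(1/2) : ℝ) + Real.sqrt 6)
      volume 0 1 :=
    ((intervalIntegral.intervalIntegrable_rpow' (by norm_num)).const_mul _).add
      intervalIntegrable_const
  refine hg.mono_fun' (aux_meas a).aestronglyMeasurable ?_
  filter_upwards [ae_restrict_mem measurableSet_uIoc] with x hx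
  rw [Set.uIoc_of_le (by norm_num : (0:ℝ) ≤ 1)] at hx
  obtain ⟨hx0, hx1⟩ := hx
  have hxr : x ^ (-(1/2) : ℝ) = (Real.sqrt x)⁻¹ := by
    rw [Real.rpow_neg hx0.le, ← Real.sqrt_eq_rpow]
  rw [Real.norm_eq_abs, abs_of_nonneg (Real.sqrt_nonneg _), hxr]
  set s := Real.sqrt x with hsdef
  have hs2 : s^2 = x := Real.sq_sqrt hx0.le
  have hspos : 0 < s := Real.sqrt_pos.2 hx0
  have hax : a / x = a * (s⁻¹)^2 := by
    rw [← hs2]; field_simp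
  have hA : (Real.sqrt a)^2 = a := Real.sq_sqrt ha
  have h6 : (Real.sqrt 6)^2 = 6 := Real.sq_sqrt (by norm_num)
  apply sqle (by positivity)
  rw [hax]
  nlinarith [mul_nonneg (mul_nonneg (Real.sqrt_nonneg a) (inv_pos.2 hspos).le)
    (Real.sqrt_nonneg 6), s6ub, sq_nonneg (s⁻¹), Real.sqrt_nonneg 6]

end Aux

set_option maxHeartbeats 2000000 in
theorem aux_main (a L : ℝ) (ha1 : 1.102 ≤ a) (ha2 : a ≤ 1.1881)
    (hL0 : 0 ≤ L) (hLU : L ≤ 97/100) :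
    IntervalIntegrable (fun x : ℝ => Real.sqrt (a / x + Real.sqrt 6)) volume 0 L ∧
    -(1/2) * Real.sqrt (6 * Real.sqrt 6) +
      (1/2) * ∫ x in (0:ℝ)..L, Real.sqrt (a / x + Real.sqrt 6) ≤ -0.5 := by
  have ha0 : (0:ℝ) ≤ a := by linarith
  set f : ℝ → ℝ := fun x => Real.sqrt (a / x + Real.sqrt 6) with hf
  have hint1 : IntervalIntegrable f volume 0 1 := aux_int a ha0
  have hIntOn : ∀ c d : ℝ, 0 ≤ c → c ≤ d → d ≤ 1 → IntervalIntegrable f volume c d := by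
    intro c d h1 h2 h3
    refine hint1.mono_set ?_
    rw [Set.uIcc_of_le h2, Set.uIcc_of_le (by norm_num : (0:ℝ) ≤ 1)]
    exact Set.Icc_subset_Icc h1 h3
  have hintL : IntervalIntegrable f volume 0 L := hIntOn 0 L le_rfl hL0 (by linarith)
  refine ⟨hintL, ?_⟩
  -- sqrt a bounds
  have hsa_ub : Real.sqrt a ≤ 1.09 := sqle (by norm_num) (by nlinarith)
  have hsa_lb : (1.0497:ℝ) ≤ Real.sqrt a := lesq (by norm_num) (by nlinarith)
  have hsa_pos : (0:ℝ) < Real.sqrt a := by linarith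
  -- Step 1: ∫₀^L f ≤ ∫₀^{97/100} f
  have step1 : ∫ x in (0:ℝ)..L, f x ≤ ∫ x in (0:ℝ)..(97/100:ℝ), f x := by
    have h2 := hIntOn L (97/100) hL0 hLU (by norm_num)
    have hadd := intervalIntegral.integral_add_adjacent_intervals hintL h2
    have hnn : 0 ≤ ∫ x in L..(97/100:ℝ), f x :=
      intervalIntegral.integral_nonneg hLU (fun u _ => Real.sqrt_nonneg _)
    linarith
  -- Step 2: constant bounds on pieces
  have hK : ∀ t t' K : ℝ, 0 < t → t ≤ t' → t' ≤ 1 → 0 ≤ K → 1.1881 / t + 2.4495 ≤ K^2 →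
      ∫ x in t..t', f x ≤ (t' - t) * K := by
    intro t t' K ht htt' ht1 hK0 hKsq
    have hmono : ∫ x in t..t', f x ≤ ∫ _x in t..t', K := by
      refine intervalIntegral.integral_mono_on htt' (hIntOn t t' ht.le htt' ht1)
        intervalIntegrable_const ?_
      intro x hx
      have hxt : t ≤ x := hx.1
      have hxpos : 0 < x := lt_of_lt_of_le ht hxt
      have hdiv : a / x ≤ 1.1881 / t := div_le_div₀ (by norm_num) ha2 ht hxt
      exact sqle hK0 (by nlinarith [s6ub])
    rw [intervalIntegral.integral_const, smul_eq_mul] at hmono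
    exact hmono
  -- Step 3: bound on [0, 2/5] via rpow majorant
  set c : ℝ := Real.sqrt 6 / (2 * Real.sqrt a) with hcdef
  have h6pos : (0:ℝ) < Real.sqrt 6 := by nlinarith [s6lb]
  have hcpos : 0 < c := by positivity
  have hrint1 : IntervalIntegrable (fun x : ℝ => x ^ (-(1/2) : ℝ)) volume 0 (2/5) :=
    intervalIntegral.intervalIntegrable_rpow' (by norm_num)
  have hrint2 : IntervalIntegrable (fun x : ℝ => x ^ ((1/2) : ℝ)) volume 0 (2/5) :=
    intervalIntegral.intervalIntegrable_rpow' (by norm_num)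
  have hg2int : IntervalIntegrable
      (fun x : ℝ => Real.sqrt a * x ^ (-(1/2) : ℝ) + c * x ^ ((1/2) : ℝ)) volume 0 (2/5) :=
    (hrint1.const_mul _).add (hrint2.const_mul _)
  have hae : f ≤ᵐ[volume.restrict (Set.Icc (0:ℝ) (2/5))]
      (fun x : ℝ => Real.sqrt a * x ^ (-(1/2) : ℝ) + c * x ^ ((1/2) : ℝ)) := by
    have hmem : ∀ᵐ x ∂(volume.restrict (Set.Icc (0:ℝ) (2/5))), x ∈ Set.Icc (0:ℝ) (2/5) :=
      ae_restrict_mem measurableSet_Icc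
    have hne : ∀ᵐ x ∂(volume.restrict (Set.Icc (0:ℝ) (2/5))), x ≠ 0 := by
      rw [MeasureTheory.ae_iff]
      have hset : {x : ℝ | ¬ x ≠ 0} = {0} := by ext x; simp
      rw [hset, Measure.restrict_apply (measurableSet_singleton 0)]
      exact measure_mono_null Set.inter_subset_left Real.volume_singleton
    filter_upwards [hmem, hne] with x hx hx0
    have hxpos : 0 < x := lt_of_le_of_ne hx.1 (Ne.symm hx0)
    have hxr : x ^ (-(1/2) : ℝ) = (Real.sqrt x)⁻¹ := by
      rw [Real.rpow_neg hxpos.le, ← Real.sqrt_eq_rpow]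
    have hxr2 : x ^ ((1/2) : ℝ) = Real.sqrt x := (Real.sqrt_eq_rpow x).symm
    show Real.sqrt (a / x + Real.sqrt 6) ≤ _
    rw [hxr, hxr2]
    set s := Real.sqrt x with hsdef
    have hs2 : s^2 = x := Real.sq_sqrt hxpos.le
    have hspos : 0 < s := Real.sqrt_pos.2 hxpos
    have hax : a / x = a * (s⁻¹)^2 := by rw [← hs2]; field_simp
    have hA : (Real.sqrt a)^2 = a := Real.sq_sqrt ha0
    have hinv : s⁻¹ * s = 1 := inv_mul_cancel₀ hspos.ne'
    have hac : Real.sqrt a * c = Real.sqrt 6 / 2 := by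
      rw [hcdef]; field_simp
    have key : (Real.sqrt a * s⁻¹ + c * s)^2 = a * (s⁻¹)^2 + Real.sqrt 6 + c^2 * s^2 := by
      have expand : (Real.sqrt a * s⁻¹ + c * s)^2 =
          (Real.sqrt a)^2 * (s⁻¹)^2 + 2 * (Real.sqrt a * c) * (s⁻¹ * s) + c^2 * s^2 := by ring
      rw [expand, hA, hinv, hac]; ring
    apply sqle (by positivity)
    rw [key, hax]
    nlinarith [sq_nonneg (c * s)]
  have hb1 : ((2:ℝ)/5) ^ ((1/2) : ℝ) ≤ 0.63246 := by
    rw [← Real.sqrt_eq_rpow]; exact sqle (by norm_num) (by norm_num)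
  have hb1nn : (0:ℝ) ≤ ((2:ℝ)/5) ^ ((1/2) : ℝ) := Real.rpow_nonneg (by norm_num) _
  have hb2 : ((2:ℝ)/5) ^ ((3/2) : ℝ) ≤ 0.25299 := by
    rw [show ((3:ℝ)/2) = ((3:ℕ):ℝ) * (1/2 : ℝ) by norm_num,
      Real.rpow_mul (by norm_num : (0:ℝ) ≤ 2/5), Real.rpow_natCast, ← Real.sqrt_eq_rpow]
    exact sqle (by norm_num) (by norm_num)
  have hb2nn : (0:ℝ) ≤ ((2:ℝ)/5) ^ ((3/2) : ℝ) := Real.rpow_nonneg (by norm_num) _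
  have hval : ∫ x in (0:ℝ)..(2/5:ℝ), (Real.sqrt a * x ^ (-(1/2) : ℝ) + c * x ^ ((1/2) : ℝ)) =
      Real.sqrt a * (((2:ℝ)/5) ^ ((1/2) : ℝ) / (1/2)) + c * (((2:ℝ)/5) ^ ((3/2) : ℝ) / (3/2)) := by
    rw [intervalIntegral.integral_add (hrint1.const_mul _) (hrint2.const_mul _),
      intervalIntegral.integral_const_mul, intervalIntegral.integral_const_mul,
      integral_rpow (Or.inl (by norm_num)), integral_rpow (Or.inl (by norm_num))]
    rw [Real.zero_rpow (by norm_num : (-(1/2:ℝ)+1) ≠ 0),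
      Real.zero_rpow (by norm_num : ((1/2:ℝ)+1) ≠ 0)]
    norm_num
  have step3 : ∫ x in (0:ℝ)..(2/5:ℝ), f x ≤
      Real.sqrt a * (((2:ℝ)/5) ^ ((1/2) : ℝ) / (1/2)) + c * (((2:ℝ)/5) ^ ((3/2) : ℝ) / (3/2)) := by
    rw [← hval]
    exact intervalIntegral.integral_mono_ae_restrict (by norm_num)
      (hIntOn 0 (2/5) le_rfl (by norm_num) (by norm_num)) hg2int hae
  -- Step 4: split [0, 97/100] into pieces
  have hadd : ∀ b c d : ℝ, 0 ≤ b → b ≤ c → c ≤ d → d ≤ 1 →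
      (∫ x in b..c, f x) + ∫ x in c..d, f x = ∫ x in b..d, f x := by
    intro b c' d hb hbc hcd hd
    exact intervalIntegral.integral_add_adjacent_intervals
      (hIntOn b c' hb hbc (by linarith)) (hIntOn c' d (by linarith) hcd hd)
  have i1 := hadd 0 (2/5) (97/100) (by norm_num) (by norm_num) (by norm_num) (by norm_num)
  have i2 := hadd (2/5) (1/2) (97/100) (by norm_num) (by norm_num) (by norm_num) (by norm_num)
  have i3 := hadd (1/2) (3/5) (97/100) (by norm_num) (by norm_num) (by norm_num) (by norm_num)
  have i4 := hadd (3/5) (7/10) (97/100) (by norm_num) (by norm_num) (by norm_num) (by norm_num)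
  have i5 := hadd (7/10) (4/5) (97/100) (by norm_num) (by norm_num) (by norm_num) (by norm_num)
  have i6 := hadd (4/5) (9/10) (97/100) (by norm_num) (by norm_num) (by norm_num) (by norm_num)
  have b1 := hK (2/5) (1/2) 2.329 (by norm_num) (by norm_num) (by norm_num) (by norm_num) (by norm_num)
  have b2 := hK (1/2) (3/5) 2.197 (by norm_num) (by norm_num) (by norm_num) (by norm_num) (by norm_num)
  have b3 := hK (3/5) (7/10) 2.105 (by norm_num) (by norm_num) (by norm_num) (by norm_num) (by norm_num)
  have b4 := hK (7/10) (4/5) 2.037 (by norm_num) (by norm_num) (by norm_num) (by norm_num) (by norm_num)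
  have b5 := hK (4/5) (9/10) 1.984 (by norm_num) (by norm_num) (by norm_num) (by norm_num) (by norm_num)
  have b6 := hK (9/10) (97/100) 1.942 (by norm_num) (by norm_num) (by norm_num) (by norm_num) (by norm_num)
  -- numeric bounds on the two leading terms
  have hcub : c ≤ 2.4495 / (2 * 1.0497) := by
    rw [hcdef]
    exact div_le_div₀ (by norm_num) s6ub (by norm_num) (by linarith)
  have t1 : Real.sqrt a * (((2:ℝ)/5) ^ ((1/2) : ℝ) / (1/2)) ≤ 1.09 * (0.63246 / (1/2)) :=
    mul_le_mul hsa_ub (by linarith) (by positivity) (by norm_num)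
  have t2 : c * (((2:ℝ)/5) ^ ((3/2) : ℝ) / (3/2)) ≤ (2.4495 / (2 * 1.0497)) * (0.25299 / (3/2)) :=
    mul_le_mul hcub (by linarith) (by positivity) (by norm_num)
  have h66 : (3.8332:ℝ) ≤ Real.sqrt (6 * Real.sqrt 6) :=
    lesq (by norm_num) (by nlinarith [s6lb])
  have hItot : ∫ x in (0:ℝ)..L, f x ≤ 2.7767 := by
    have : ∫ x in (0:ℝ)..(97/100:ℝ), f x ≤ 2.7767 := by
      rw [← i1, ← i2, ← i3, ← i4, ← i5, ← i6]
      linarith [step3, b1, b2, b3, b4, b5, b6, t1, t2]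
    linarith [step1]
  show -(1/2) * Real.sqrt (6 * Real.sqrt 6) + (1/2) * ∫ x in (0:ℝ)..L, f x ≤ -0.5
  linarith [hItot, h66]


set_option maxHeartbeats 1000000 in
theorem newtonian_tetrahedral_v_at_collision_neg :
    IntervalIntegrable
      (fun x : ℝ => Real.sqrt
        ((Real.sqrt 6 / 2) * (π/2 - Real.arctan (1 / Real.sqrt 2)) / x + Real.sqrt 6))
      volume 0 (π/2 - Real.arctan (1 / Real.sqrt 2)) ∧
    -(1/2) * Real.sqrt (6 * Real.sqrt 6) +
      (1/2) * ∫ x in (0:ℝ)..(π/2 - Real.arctan (1 / Real.sqrt 2)),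
        Real.sqrt ((Real.sqrt 6 / 2) * (π/2 - Real.arctan (1 / Real.sqrt 2)) / x + Real.sqrt 6)
      ≤ -0.5 := by
  have heq : π/2 - Real.arctan (1 / Real.sqrt 2) = Real.arctan (Real.sqrt 2) := by
    rw [one_div, Real.arctan_inv_of_pos (by positivity : (0:ℝ) < Real.sqrt 2)]
    ring
  rw [heq]
  have hL0 : (0:ℝ) ≤ Real.arctan (Real.sqrt 2) := by linarith [L_lb]
  have hlow : (2.449:ℝ) * 0.9 ≤ Real.sqrt 6 * Real.arctan (Real.sqrt 2) :=
    mul_le_mul s6lb L_lb (by norm_num) (Real.sqrt_nonneg 6)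
  have hhigh : Real.sqrt 6 * Real.arctan (Real.sqrt 2) ≤ 2.4495 * 0.97 :=
    mul_le_mul s6ub L_ub hL0 (by norm_num)
  exact aux_main (Real.sqrt 6 / 2 * Real.arctan (Real.sqrt 2)) (Real.arctan (Real.sqrt 2))
    (by linarith) (by linarith) hL0 (by linarith [L_ub])
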